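/- arXiv:2509.22219 — 2 statements merged into one kernel-verified Lean document; each statement's English description precedes it below -/
import Mathlib

section
/- Let n = 2M, A ∈ SO(n), λ ∈ ℝᴹ, and B = Aᵀ(⊕ᵢ λᵢ J)A. Let x ∈ ℝⁿ, v = Ax with blocks v₁, …, v_M, assume v₁ ≠ 0, and let t₀ be valid for x. For any t ∈ ℝ set x' = exp(tB)x and v' = Ax'. Then v'ᵢ = R(tλᵢ)vᵢ for every i, v'₁ ≠ 0, the number t + t₀ is valid for x', and invRep(x'; t + t₀) = invRep(x; t₀). -/
/-!
Since `A` is orthogonal, `A exp(tB) Aᵀ = exp(⊕ᵢ tλᵢ J)`, and under the embedding of `ℂ` into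
real 2×2 matrices by left multiplication `θJ` is the image of `iθ`, so `exp(θJ) = R(θ)`. Thus the
flow rotates each block `vᵢ` by the angle `tλᵢ`; rotations add angles and preserve the Euclidean
norm, which shifts the validity of `t₀` to `t + t₀` and leaves `invRep` unchanged.
-/

open Matrix NormedSpace

noncomputable section

/-- `R(t)`: the 2×2 rotation matrix. -/
def R2 (t : ℝ) : Matrix (Fin 2) (Fin 2) ℝ :=
  !![Real.cos t, -Real.sin t; Real.sin t, Real.cos t]

/-- `J`: the 2×2 matrix with rows (0, -1) and (1, 0). -/
def Jmat : Matrix (Fin 2) (Fin 2) ℝ := !![0, -1; 1, 0]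

/-- Index type for `ℝⁿ` with `n = 2M`: component `2(i-1)+p` of block `i` is indexed `(p, i)`. -/
abbrev Idx (M : ℕ) := Fin 2 × Fin M

/-- `SO(n)` for `n = 2M`, on the block index type. -/
def SOb (M : ℕ) : Set (Matrix (Idx M) (Idx M) ℝ) :=
  {A | Aᵀ * A = 1 ∧ A.det = 1}

/-- The block-diagonal matrix `⊕ᵢ Cᵢ`. -/
def bdiag {M : ℕ} (C : Fin M → Matrix (Fin 2) (Fin 2) ℝ) : Matrix (Idx M) (Idx M) ℝ :=
  Matrix.blockDiagonal C

/-- The `i`-th 2-dimensional block `vᵢ` of a vector `v ∈ ℝⁿ`. -/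
def blk {M : ℕ} (v : Idx M → ℝ) (i : Fin M) : Fin 2 → ℝ := fun p => v (p, i)

/-- Concatenation `u₁ ⊕ ⋯ ⊕ u_M` of 2-dimensional blocks. -/
def cat {M : ℕ} (u : Fin M → (Fin 2 → ℝ)) : Idx M → ℝ := fun pi => u pi.2 pi.1

/-- `e₁ = (1, 0) ∈ ℝ²`. -/
def e1 : Fin 2 → ℝ := ![1, 0]

/-- The Euclidean norm `‖u‖₂` of `u ∈ ℝ²`. -/
def norm2 (u : Fin 2 → ℝ) : ℝ := Real.sqrt (u 0 ^ 2 + u 1 ^ 2)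

/-- `t₀` is valid for `x` (w.r.t. `A`, `λ`): `R(t₀λ₁)e₁ = v₁/‖v₁‖₂` where `v = Ax`. -/
def valid {M : ℕ} [NeZero M] (A : Matrix (Idx M) (Idx M) ℝ) (lam : Fin M → ℝ)
    (x : Idx M → ℝ) (t₀ : ℝ) : Prop :=
  (R2 (t₀ * lam 0)).mulVec e1 = (norm2 (blk (A.mulVec x) 0))⁻¹ • blk (A.mulVec x) 0

/-- `invRep(x; t₀) = ‖v₁‖₂ e₁ ⊕ R(−t₀λ₂)v₂ ⊕ ⋯ ⊕ R(−t₀λ_M)v_M`, where `v = Ax`. -/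
def invRep {M : ℕ} [NeZero M] (A : Matrix (Idx M) (Idx M) ℝ) (lam : Fin M → ℝ)
    (x : Idx M → ℝ) (t₀ : ℝ) : Idx M → ℝ :=
  cat (fun i =>
    if i = 0 then norm2 (blk (A.mulVec x) 0) • e1
    else (R2 (-(t₀ * lam i))).mulVec (blk (A.mulVec x) i))

theorem R2_eq_leftMulMatrix (θ : ℝ) :
    R2 θ = Algebra.leftMulMatrix Complex.basisOneI (Complex.exp (θ * Complex.I)) := by
  rw [Algebra.leftMulMatrix_complex, Complex.exp_ofReal_mul_I_re, Complex.exp_ofReal_mul_I_im, R2]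

theorem R2_add (a b : ℝ) : R2 (a + b) = R2 a * R2 b := by
  simp only [R2_eq_leftMulMatrix, Complex.ofReal_add, add_mul, Complex.exp_add, map_mul]

theorem R2_zero : R2 0 = 1 := by
  simp [R2_eq_leftMulMatrix]

theorem norm2_R2_mulVec (θ : ℝ) (u : Fin 2 → ℝ) : norm2 (R2 θ *ᵥ u) = norm2 u := by
  unfold norm2
  congr 1
  simp only [R2, mulVec, dotProduct, Fin.sum_univ_two, of_apply, cons_val', cons_val_zero,
    cons_val_one, empty_val', cons_val_fin_one]
  linear_combination (u 0 ^ 2 + u 1 ^ 2) * Real.sin_sq_add_cos_sq θ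

theorem R2_mulVec_ne_zero (θ : ℝ) {u : Fin 2 → ℝ} (hu : u ≠ 0) : R2 θ *ᵥ u ≠ 0 := by
  intro h
  apply hu
  simpa only [mulVec_mulVec, ← R2_add, neg_add_cancel, R2_zero, one_mulVec, mulVec_zero] using
    congrArg (R2 (-θ) *ᵥ ·) h

theorem blk_bdiag_mulVec {M : ℕ} (C : Fin M → Matrix (Fin 2) (Fin 2) ℝ) (v : Idx M → ℝ)
    (i : Fin M) : blk (bdiag C *ᵥ v) i = C i *ᵥ blk v i := by
  funext p
  simp [blk, bdiag, mulVec, dotProduct, Fintype.sum_prod_type, blockDiagonal_apply]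

section Exponential

-- `exp` itself needs no norm, but `map_exp` and `Pi.coe_exp` are stated for normed rings.
open scoped Matrix.Norms.Operator

theorem exp_smul_Jmat (θ : ℝ) : exp (θ • Jmat) = R2 θ := by
  have hJ : θ • Jmat = Algebra.leftMulMatrix Complex.basisOneI (θ * Complex.I) := by
    rw [Algebra.leftMulMatrix_complex, Jmat]; simp
  have hcont : Continuous (Algebra.leftMulMatrix Complex.basisOneI) :=
    (Algebra.leftMulMatrix Complex.basisOneI).toLinearMap.continuous_of_finiteDimensional
  rw [hJ, R2_eq_leftMulMatrix, Complex.exp_eq_exp_ℂ]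
  exact (map_exp _ hcont _).symm

theorem exp_bdiag_smul_Jmat {M : ℕ} (θ : Fin M → ℝ) :
    exp (bdiag fun i => θ i • Jmat) = bdiag fun i => R2 (θ i) := by
  rw [bdiag, exp_blockDiagonal]
  exact congrArg _ (funext fun i => (Pi.coe_exp _ i).trans (exp_smul_Jmat (θ i)))

end Exponential

theorem exp_transpose_mul_mul_of_orthogonal {n : Type*} [Fintype n] [DecidableEq n]
    {A : Matrix n n ℝ} (hA : Aᵀ * A = 1) (D : Matrix n n ℝ) :
    exp (Aᵀ * D * A) = Aᵀ * exp D * A := by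
  have hinv : A⁻¹ = Aᵀ := inv_eq_left_inv hA
  simpa only [hinv] using exp_conj' A D (IsUnit.of_mul_eq_one_right Aᵀ hA)

theorem blk_mulVec_exp_smul_conj {M : ℕ} {A : Matrix (Idx M) (Idx M) ℝ} (hA : Aᵀ * A = 1)
    (lam : Fin M → ℝ) (t : ℝ) (x : Idx M → ℝ) (i : Fin M) :
    blk (A *ᵥ (exp (t • (Aᵀ * bdiag (fun i => lam i • Jmat) * A)) *ᵥ x)) i =
      R2 (t * lam i) *ᵥ blk (A *ᵥ x) i := by
  have hsmul : t • (Aᵀ * bdiag (fun i => lam i • Jmat) * A) =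
      Aᵀ * bdiag (fun i => (t * lam i) • Jmat) * A := by
    have hfun : (fun i => (t * lam i) • Jmat) = t • fun i => lam i • Jmat :=
      funext fun i => mul_smul t (lam i) Jmat
    rw [bdiag, bdiag, hfun, blockDiagonal_smul, Matrix.mul_smul, Matrix.smul_mul]
  have hA' : A * Aᵀ = 1 := mul_eq_one_comm.mp hA
  rw [hsmul, exp_transpose_mul_mul_of_orthogonal hA, exp_bdiag_smul_Jmat, mulVec_mulVec,
    ← Matrix.mul_assoc, ← Matrix.mul_assoc, hA', Matrix.one_mul, ← mulVec_mulVec,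
    blk_bdiag_mulVec]

section RotatedBlocks

variable {M : ℕ} [NeZero M] {A : Matrix (Idx M) (Idx M) ℝ} {lam : Fin M → ℝ} {x x' : Idx M → ℝ}
  {t : ℝ}

theorem valid_add (h : blk (A *ᵥ x') 0 = R2 (t * lam 0) *ᵥ blk (A *ᵥ x) 0) {t₀ : ℝ}
    (ht₀ : valid A lam x t₀) : valid A lam x' (t + t₀) := by
  rw [valid, h, add_mul, R2_add, ← mulVec_mulVec, ht₀, mulVec_smul, norm2_R2_mulVec]

theorem invRep_add (h : ∀ i, blk (A *ᵥ x') i = R2 (t * lam i) *ᵥ blk (A *ᵥ x) i) (t₀ : ℝ) :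
    invRep A lam x' (t + t₀) = invRep A lam x t₀ := by
  unfold invRep
  congr 1
  funext i
  split_ifs
  · rw [h, norm2_R2_mulVec]
  · rw [h, mulVec_mulVec, ← R2_add]
    congr 2
    ring

end RotatedBlocks

/-- If `x' = exp(tB)x` and `v' = Ax'`, then `v'ᵢ = R(tλᵢ)vᵢ` for all `i`,
`v'₁ ≠ 0`, `t + t₀` is valid for `x'`, and `invRep(x'; t + t₀) = invRep(x; t₀)`. -/
theorem stmt5 (M : ℕ) [NeZero M] (A : Matrix (Idx M) (Idx M) ℝ) (hA : A ∈ SOb M)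
    (lam : Fin M → ℝ) (B : Matrix (Idx M) (Idx M) ℝ)
    (hB : B = Aᵀ * bdiag (fun i => lam i • Jmat) * A)
    (x : Idx M → ℝ) (hv : blk (A.mulVec x) 0 ≠ 0)
    (t₀ : ℝ) (ht₀ : valid A lam x t₀)
    (t : ℝ) (x' : Idx M → ℝ) (hx' : x' = (exp (t • B)).mulVec x) :
    (∀ i : Fin M, blk (A.mulVec x') i = (R2 (t * lam i)).mulVec (blk (A.mulVec x) i)) ∧
      blk (A.mulVec x') 0 ≠ 0 ∧
      valid A lam x' (t + t₀) ∧
      invRep A lam x' (t + t₀) = invRep A lam x t₀ := by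
  have hblk (i : Fin M) : blk (A *ᵥ x') i = R2 (t * lam i) *ᵥ blk (A *ᵥ x) i := by
    rw [hx', hB]
    exact blk_mulVec_exp_smul_conj hA.1 lam t x i
  refine ⟨hblk, ?_, valid_add (hblk 0) ht₀, invRep_add hblk t₀⟩
  rw [hblk 0]
  exact R2_mulVec_ne_zero _ hv
end
end

section
/- Let n = 2M, let A be an invertible real n×n matrix, λ ∈ ℝᴹ with λ₁ ≠ 0, and L = A⁻¹(⊕ᵢ λᵢ K)A. Let Ψ : ℝⁿ → ℝᵐ satisfy Ψ(exp(sL)·x) = Ψ(x) for all s ∈ ℝ and all x ∈ ℝⁿ. Then there exists φ : ℝⁿ → ℝᵐ such that for every x ∈ ℝⁿ whose blocks v = Ax satisfy |v_{1,2}| < |v_{1,1}|, Ψ(x) = φ(invRep_h(x)). -/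
/-! In the coordinates `v = Ax` the flow `exp(sL)` is the block-diagonal boost `⊕ᵢ H(sλᵢ)`,
because `exp(tK) = H(t)`. Flowing `x` for time `-t₀` boosts `v₁ = (a, b)` with `|b| < |a|` to
the vertex `(sgn a · √(a² − b²), 0)` of its hyperbola and turns `v` into `invRep_h(x)`, so
`φ(y) = Ψ(A⁻¹y)` works. -/

open Matrix NormedSpace

noncomputable section

/-- `H(t)`: the 2×2 hyperbolic rotation with rows (cosh t, sinh t), (sinh t, cosh t). -/
def Hyp (t : ℝ) : Matrix (Fin 2) (Fin 2) ℝ :=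
  !![Real.cosh t, Real.sinh t; Real.sinh t, Real.cosh t]

/-- `G(t)`: the 2×2 shear with rows (1, t), (0, 1). -/
def Gm (t : ℝ) : Matrix (Fin 2) (Fin 2) ℝ := !![1, t; 0, 1]

/-- `K`: rows (0, 1), (1, 0). -/
def Kmat : Matrix (Fin 2) (Fin 2) ℝ := !![0, 1; 1, 0]

/-- `N`: rows (0, 1), (0, 0). -/
def Nmat : Matrix (Fin 2) (Fin 2) ℝ := !![0, 1; 0, 0]

/-- `e₂ = (0, 1) ∈ ℝ²`. -/
def e2 : Fin 2 → ℝ := ![0, 1]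

/-- The inverse hyperbolic tangent. -/
def artanh (x : ℝ) : ℝ := Real.log ((1 + x) / (1 - x)) / 2

/-- `t₀` is valid for `x` (elliptic case): `R(t₀λ₁)e₁ = v₁/‖v₁‖₂` where `v = Ax`. -/
def validE {M : ℕ} [NeZero M] (A : Matrix (Idx M) (Idx M) ℝ) (lam : Fin M → ℝ)
    (x : Idx M → ℝ) (t₀ : ℝ) : Prop :=
  (R2 (t₀ * lam 0)).mulVec e1 = (norm2 (blk (A.mulVec x) 0))⁻¹ • blk (A.mulVec x) 0

/-- `invRep_e(x; t₀) = ‖v₁‖₂ e₁ ⊕ R(−t₀λ₂)v₂ ⊕ ⋯ ⊕ R(−t₀λ_M)v_M`, where `v = Ax`. -/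
def invRepE {M : ℕ} [NeZero M] (A : Matrix (Idx M) (Idx M) ℝ) (lam : Fin M → ℝ)
    (x : Idx M → ℝ) (t₀ : ℝ) : Idx M → ℝ :=
  cat (fun i =>
    if i = 0 then norm2 (blk (A.mulVec x) 0) • e1
    else (R2 (-(t₀ * lam i))).mulVec (blk (A.mulVec x) i))

/-- The hyperbolic parameter `t₀ = artanh(v_{1,2}/v_{1,1})/λ₁`, where `v = Ax`. -/
def t0H {M : ℕ} [NeZero M] (A : Matrix (Idx M) (Idx M) ℝ) (lam : Fin M → ℝ)
    (x : Idx M → ℝ) : ℝ :=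
  artanh (blk (A.mulVec x) 0 1 / blk (A.mulVec x) 0 0) / lam 0

/-- `invRep_h(x) = sgn(v_{1,1})√(v_{1,1}² − v_{1,2}²) e₁ ⊕ H(−t₀λ₂)v₂ ⊕ ⋯`, `v = Ax`. -/
def invRepH {M : ℕ} [NeZero M] (A : Matrix (Idx M) (Idx M) ℝ) (lam : Fin M → ℝ)
    (x : Idx M → ℝ) : Idx M → ℝ :=
  cat (fun i =>
    if i = 0 then
      (Real.sign (blk (A.mulVec x) 0 0) *
        Real.sqrt (blk (A.mulVec x) 0 0 ^ 2 - blk (A.mulVec x) 0 1 ^ 2)) • e1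
    else (Hyp (-(t0H A lam x * lam i))).mulVec (blk (A.mulVec x) i))

/-- The parabolic parameter `t₀ = v_{1,1}/(λ₁ v_{1,2})`, where `v = Ax`. -/
def t0P {M : ℕ} [NeZero M] (A : Matrix (Idx M) (Idx M) ℝ) (lam : Fin M → ℝ)
    (x : Idx M → ℝ) : ℝ :=
  blk (A.mulVec x) 0 0 / (lam 0 * blk (A.mulVec x) 0 1)

/-- `invRep_p(x) = v_{1,2} e₂ ⊕ G(−t₀λ₂)v₂ ⊕ ⋯ ⊕ G(−t₀λ_M)v_M`, where `v = Ax`. -/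
def invRepP {M : ℕ} [NeZero M] (A : Matrix (Idx M) (Idx M) ℝ) (lam : Fin M → ℝ)
    (x : Idx M → ℝ) : Idx M → ℝ :=
  cat (fun i =>
    if i = 0 then blk (A.mulVec x) 0 1 • e2
    else (Gm (-(t0P A lam x * lam i))).mulVec (blk (A.mulVec x) i))

lemma artanh_eq_real_artanh {x : ℝ} (hx : x ∈ Set.Icc (-1) 1) : artanh x = Real.artanh x := by
  rw [Real.artanh_eq_half_log hx, artanh]
  ring

lemma Hyp_neg_artanh_mulVec {u : Fin 2 → ℝ} (h : |u 1| < |u 0|) :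
    Hyp (-artanh (u 1 / u 0)) *ᵥ u = (Real.sign (u 0) * √(u 0 ^ 2 - u 1 ^ 2)) • e1 := by
  have ha : u 0 ≠ 0 := abs_pos.mp ((abs_nonneg _).trans_lt h)
  generalize hr_def : u 1 / u 0 = r
  have hb : u 1 = r * u 0 := by rw [← hr_def, div_mul_cancel₀ _ ha]
  have hr : r ∈ Set.Ioo (-1) 1 := by
    rw [← hr_def, Set.mem_Ioo, ← abs_lt, abs_div, div_lt_one (abs_pos.mpr ha)]
    exact h
  have hq : 0 < 1 - r ^ 2 := by nlinarith [hr.1, hr.2]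
  have hsq : √(1 - r ^ 2) ^ 2 = 1 - r ^ 2 := Real.sq_sqrt hq.le
  have hnorm : Real.sign (u 0) * √(u 0 ^ 2 - u 1 ^ 2) = u 0 * √(1 - r ^ 2) := by
    rw [hb, show u 0 ^ 2 - (r * u 0) ^ 2 = u 0 ^ 2 * (1 - r ^ 2) by ring,
      Real.sqrt_mul (sq_nonneg _), Real.sqrt_sq_eq_abs, ← mul_assoc]
    rcases ha.lt_or_gt with hneg | hpos
    · rw [Real.sign_of_neg hneg, abs_of_neg hneg]; ring
    · rw [Real.sign_of_pos hpos, abs_of_pos hpos]; ring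
  rw [hnorm, artanh_eq_real_artanh (Set.Ioo_subset_Icc_self hr)]
  ext p
  fin_cases p <;>
    simp [Hyp, e1, mulVec, dotProduct, Fin.sum_univ_two, Real.cosh_artanh hr,
      Real.sinh_artanh hr, hb]
  · field_simp
    linear_combination -hsq
  · ring

lemma exp_smul_Kmat (t : ℝ) : exp (t • Kmat) = Hyp t := by
  set P : Matrix (Fin 2) (Fin 2) ℝ := !![1, 1; 1, -1]
  have hP : P⁻¹ = !![1 / 2, 1 / 2; 1 / 2, -1 / 2] := Matrix.inv_eq_left_inv <| by
    ext i j; fin_cases i <;> fin_cases j <;> norm_num [P]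
  have hPunit : IsUnit P := by
    rw [Matrix.isUnit_iff_isUnit_det, Matrix.det_fin_two_of]; norm_num
  have hK : t • Kmat = P * diagonal ![t, -t] * P⁻¹ := by
    rw [hP, diagonal_fin_two]
    ext i j; fin_cases i <;> fin_cases j <;> simp [P, Kmat] <;> ring
  rw [hK, Matrix.exp_conj _ _ hPunit, Matrix.exp_diagonal, hP, Pi.exp_def, diagonal_fin_two]
  ext i j
  fin_cases i <;> fin_cases j <;>
    simp [P, Hyp, Real.cosh_eq, Real.sinh_eq, ← Real.exp_eq_exp_ℝ] <;> ring

lemma exp_bdiag {M : ℕ} (C : Fin M → Matrix (Fin 2) (Fin 2) ℝ) :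
    exp (bdiag C) = bdiag fun i => exp (C i) := by
  rw [bdiag, bdiag, Matrix.exp_blockDiagonal]
  -- `Pi.exp_def` needs a norm on the factors; matrices only have a scoped one
  exact congrArg blockDiagonal (open scoped Norms.Operator in Pi.exp_def C)

lemma exp_smul_bdiag_smul_Kmat {M : ℕ} (s : ℝ) (lam : Fin M → ℝ) :
    exp (s • bdiag fun i => lam i • Kmat) = bdiag fun i => Hyp (s * lam i) := by
  have hs : s • bdiag (fun i => lam i • Kmat) = bdiag fun i => (s * lam i) • Kmat := by
    rw [bdiag, bdiag, ← blockDiagonal_smul]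
    simp only [Pi.smul_def, smul_smul]
  simp only [hs, exp_bdiag, exp_smul_Kmat]

lemma bdiag_mulVec {M : ℕ} (C : Fin M → Matrix (Fin 2) (Fin 2) ℝ) (v : Idx M → ℝ) :
    bdiag C *ᵥ v = cat fun i => C i *ᵥ blk v i := by
  ext ⟨p, i⟩
  simp [bdiag, cat, blk, mulVec, dotProduct, Matrix.blockDiagonal_apply, Fintype.sum_prod_type,
    ite_mul]

lemma invRepH_eq_bdiag_mulVec {M : ℕ} [NeZero M] (A : Matrix (Idx M) (Idx M) ℝ)
    {lam : Fin M → ℝ} (hlam : lam 0 ≠ 0) {x : Idx M → ℝ}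
    (hx : |blk (A *ᵥ x) 0 1| < |blk (A *ᵥ x) 0 0|) :
    invRepH A lam x = bdiag (fun i => Hyp (-t0H A lam x * lam i)) *ᵥ (A *ᵥ x) := by
  rw [bdiag_mulVec, invRepH]
  congr 1
  funext i
  split_ifs with hi
  · rw [hi, t0H, neg_mul, div_mul_cancel₀ _ hlam, Hyp_neg_artanh_mulVec hx]
  · rw [neg_mul]

/-- **Hyperbolic invariant functions.** If `Ψ(exp(sL)x) = Ψ(x)` for all
`s, x`, with `L = A⁻¹(⊕ᵢ λᵢK)A`, then there is `φ` with `Ψ(x) = φ(invRep_h(x))` for every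
`x` whose first block `v₁` of `v = Ax` satisfies `|v_{1,2}| < |v_{1,1}|`. -/
theorem stmt11 (M : ℕ) [NeZero M] (m : ℕ)
    (A : Matrix (Idx M) (Idx M) ℝ) (hA : IsUnit A)
    (lam : Fin M → ℝ) (hlam : lam 0 ≠ 0)
    (L : Matrix (Idx M) (Idx M) ℝ)
    (hL : L = A⁻¹ * bdiag (fun i => lam i • Kmat) * A)
    (Ψ : (Idx M → ℝ) → (Fin m → ℝ))
    (hΨ : ∀ (s : ℝ) (x : Idx M → ℝ), Ψ ((exp (s • L)).mulVec x) = Ψ x) :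
    ∃ φ : (Idx M → ℝ) → (Fin m → ℝ),
      ∀ x : Idx M → ℝ, |blk (A.mulVec x) 0 1| < |blk (A.mulVec x) 0 0| →
        Ψ x = φ (invRepH A lam x) := by
  refine ⟨fun y => Ψ (A⁻¹ *ᵥ y), fun x hx => ?_⟩
  have hflow (s : ℝ) : exp (s • L) = A⁻¹ * bdiag (fun i => Hyp (s * lam i)) * A := by
    rw [hL, ← Matrix.smul_mul, ← Matrix.mul_smul, Matrix.exp_conj' _ _ hA,
      exp_smul_bdiag_smul_Kmat]
  rw [← hΨ (-t0H A lam x) x, hflow, invRepH_eq_bdiag_mulVec A hlam hx]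
  simp only [mulVec_mulVec, Matrix.mul_assoc]
end
end
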